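/- If two states σ and σ' agree on all variables occurring in a command c, and c contains no while loops, then (c, σ) and (c, σ') execute in lock-step with identical leakage: for every n, the n-step leaks coincide, the residual commands coincide, and the resulting states agree on all variables of c. -/
import Mathlib


/-- Arithmetic operators. -/
inductive AOp | add | sub | mul | div | mod
deriving DecidableEq

/-- Arithmetic expressions. -/
inductive AExpr
  | const (v : Int)
  | var (x : String)
  | binop (o : AOp) (e1 e2 : AExpr)
deriving DecidableEq

/-- Boolean expressions. -/
inductive BExpr
  | tt
  | ff
  | or (b1 b2 : BExpr)
  | not (b : BExpr)
  | le (e1 e2 : AExpr)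
  | eq (e1 e2 : AExpr)
deriving DecidableEq

/-- Commands of the small imperative language. -/
inductive Cmd
  | skip
  | assign (x : String) (e : AExpr)
  | seq (c1 c2 : Cmd)
  | ite (b : BExpr) (c1 c2 : Cmd)
  | whileDo (b : BExpr) (c : Cmd)
deriving DecidableEq

abbrev Store := String → Int

def AOp.denote : AOp → Int → Int → Int
  | .add => (· + ·)
  | .sub => (· - ·)
  | .mul => (· * ·)
  | .div => (· / ·)
  | .mod => (· % ·)

/-- Total evaluation of arithmetic expressions. -/
def aeval : AExpr → Store → Int
  | .const v, _ => v
  | .var x, σ => σ x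
  | .binop o e1 e2, σ => o.denote (aeval e1 σ) (aeval e2 σ)

/-- Total evaluation of boolean expressions. -/
def beval : BExpr → Store → Bool
  | .tt, _ => true
  | .ff, _ => false
  | .or b1 b2, σ => beval b1 σ || beval b2 σ
  | .not b, σ => !(beval b σ)
  | .le e1 e2, σ => decide (aeval e1 σ ≤ aeval e2 σ)
  | .eq e1 e2, σ => decide (aeval e1 σ = aeval e2 σ)

/-- Atomic leaks. -/
inductive Leak
  | eps
  | op (o : AOp)
  | ident (x : String)
  | branch (b : Bool)
deriving DecidableEq

/-- Leakage of an arithmetic expression in a state. -/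
def aleak : AExpr → Store → List Leak
  | .const _, _ => [.eps]
  | .var _, _ => [.eps]
  | .binop o e1 e2, σ => aleak e1 σ ++ aleak e2 σ ++ [.op o]

/-- Leakage of a boolean expression in a state. -/
def bleak : BExpr → Store → List Leak
  | .tt, _ => [.eps]
  | .ff, _ => [.eps]
  | .not b, σ => bleak b σ
  | .or b1 b2, σ => bleak b1 σ ++ bleak b2 σ
  | .le e1 e2, σ => aleak e1 σ ++ aleak e2 σ
  | .eq e1 e2, σ => aleak e1 σ ++ aleak e2 σ

/-- Instrumented small-step operational semantics. -/
inductive Step : Cmd × Store → List Leak → Cmd × Store → Prop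
  | assign {x e σ} :
      Step (.assign x e, σ) (aleak e σ ++ [.ident x])
        (.skip, Function.update σ x (aeval e σ))
  | seqStep {c1 σ t c1' σ'} (c2 : Cmd) :
      Step (c1, σ) t (c1', σ') → Step (.seq c1 c2, σ) t (.seq c1' c2, σ')
  | seqSkip {σ} (c2 : Cmd) : Step (.seq .skip c2, σ) [.eps] (c2, σ)
  | iteTrue {b c1 c2 σ} :
      beval b σ = true →
      Step (.ite b c1 c2, σ) (bleak b σ ++ [.branch true]) (c1, σ)
  | iteFalse {b c1 c2 σ} :
      beval b σ = false →
      Step (.ite b c1 c2, σ) (bleak b σ ++ [.branch false]) (c2, σ)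
  | whileUnfold {b c σ} :
      Step (.whileDo b c, σ) [.eps] (.ite b (.seq c (.whileDo b c)) .skip, σ)

/-- Reflexive-transitive closure of the step relation (leaks ignored). -/
inductive StepStar : Cmd × Store → Cmd × Store → Prop
  | refl (A : Cmd × Store) : StepStar A A
  | tail {A B C : Cmd × Store} {t : List Leak} : StepStar A B → Step B t C → StepStar A C

/-- n-step execution, accumulating leakage. -/
inductive StepsN : Cmd × Store → ℕ → List Leak → Cmd × Store → Prop
  | refl (A : Cmd × Store) : StepsN A 0 [] A
  | step {A B C : Cmd × Store} {t u : List Leak} {n : ℕ} :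
      Step A t B → StepsN B n u C → StepsN A (n + 1) (t ++ u) C

/-- Commands without while loops. -/
inductive WhileFree : Cmd → Prop
  | skip : WhileFree .skip
  | assign (x e) : WhileFree (.assign x e)
  | seq {c1 c2} : WhileFree c1 → WhileFree c2 → WhileFree (.seq c1 c2)
  | ite {c1 c2} (b) : WhileFree c1 → WhileFree c2 → WhileFree (.ite b c1 c2)

def avars : AExpr → Finset String
  | .const _ => ∅
  | .var x => {x}
  | .binop _ e1 e2 => avars e1 ∪ avars e2

def bvars : BExpr → Finset String
  | .tt => ∅
  | .ff => ∅
  | .not b => bvars b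
  | .or b1 b2 => bvars b1 ∪ bvars b2
  | .le e1 e2 => avars e1 ∪ avars e2
  | .eq e1 e2 => avars e1 ∪ avars e2

/-- Variables read or written by a command. -/
def cvars : Cmd → Finset String
  | .skip => ∅
  | .assign x e => insert x (avars e)
  | .seq c1 c2 => cvars c1 ∪ cvars c2
  | .ite b c1 c2 => bvars b ∪ cvars c1 ∪ cvars c2
  | .whileDo b c => bvars b ∪ cvars c

lemma aleak_eq (e : AExpr) (σ σ' : Store) : aleak e σ = aleak e σ' := by
  induction e <;> simp [aleak, *]

lemma bleak_eq (b : BExpr) (σ σ' : Store) : bleak b σ = bleak b σ' := by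
  induction b <;> simp [bleak, aleak_eq _ σ σ', *]

lemma aeval_agree (e : AExpr) {σ σ' : Store} (h : ∀ x ∈ avars e, σ x = σ' x) :
    aeval e σ = aeval e σ' := by
  induction e with
  | const v => rfl
  | var x => exact h x (by simp [avars])
  | binop o e1 e2 ih1 ih2 =>
      simp only [aeval]
      rw [ih1 (fun x hx => h x (by simp [avars, hx])),
          ih2 (fun x hx => h x (by simp [avars, hx]))]

lemma beval_agree (b : BExpr) {σ σ' : Store} (h : ∀ x ∈ bvars b, σ x = σ' x) :
    beval b σ = beval b σ' := by
  induction b with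
  | tt => rfl
  | ff => rfl
  | or b1 b2 ih1 ih2 =>
      simp only [beval]
      rw [ih1 (fun x hx => h x (by simp [bvars, hx])),
          ih2 (fun x hx => h x (by simp [bvars, hx]))]
  | not b ih => simp only [beval]; rw [ih h]
  | le e1 e2 =>
      simp only [beval]
      rw [aeval_agree e1 (fun x hx => h x (by simp [bvars, hx])),
          aeval_agree e2 (fun x hx => h x (by simp [bvars, hx]))]
  | eq e1 e2 =>
      simp only [beval]
      rw [aeval_agree e1 (fun x hx => h x (by simp [bvars, hx])),
          aeval_agree e2 (fun x hx => h x (by simp [bvars, hx]))]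

lemma step_cvars {c σ t d τ} (h : Step (c, σ) t (d, τ)) : cvars d ⊆ cvars c := by
  generalize hA : (c, σ) = A at h
  generalize hB : (d, τ) = B at h
  induction h generalizing c σ d τ with
  | assign =>
      cases hA; cases hB; simp [cvars]
  | seqStep c2 hs ih =>
      cases hA; cases hB
      simp only [cvars]
      exact Finset.union_subset_union (ih rfl rfl) (subset_refl _)
  | seqSkip c2 =>
      cases hA; cases hB; simp [cvars]
  | iteTrue hb =>
      cases hA; cases hB
      simp only [cvars]
      intro x hx; simp [Finset.mem_union]; tauto
  | iteFalse hb =>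
      cases hA; cases hB
      simp only [cvars]
      intro x hx; simp [Finset.mem_union]; tauto
  | whileUnfold =>
      cases hA; cases hB
      simp only [cvars]
      intro x hx
      simp [Finset.mem_union] at hx ⊢
      tauto

lemma step_frame {c σ t d τ} (h : Step (c, σ) t (d, τ)) :
    ∀ x, x ∉ cvars c → τ x = σ x := by
  generalize hA : (c, σ) = A at h
  generalize hB : (d, τ) = B at h
  induction h generalizing c σ d τ with
  | @assign x0 e σ0 =>
      cases hA; cases hB
      intro x hx
      simp [cvars] at hx
      simp [Function.update, hx.1]
  | seqStep c2 hs ih =>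
      cases hA; cases hB
      intro x hx
      simp [cvars] at hx
      exact ih rfl rfl x hx.1
  | seqSkip c2 => cases hA; cases hB; intro x _; rfl
  | iteTrue hb => cases hA; cases hB; intro x _; rfl
  | iteFalse hb => cases hA; cases hB; intro x _; rfl
  | whileUnfold => cases hA; cases hB; intro x _; rfl

lemma step_wf {c σ t d τ} (hwf : WhileFree c) (h : Step (c, σ) t (d, τ)) :
    WhileFree d := by
  generalize hA : (c, σ) = A at h
  generalize hB : (d, τ) = B at h
  induction h generalizing c σ d τ with
  | assign => cases hA; cases hB; exact .skip
  | seqStep c2 hs ih =>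
      cases hA; cases hB
      cases hwf with
      | seq h1 h2 => exact .seq (ih h1 rfl rfl) h2
  | seqSkip c2 =>
      cases hA; cases hB
      cases hwf with | seq h1 h2 => exact h2
  | iteTrue hb =>
      cases hA; cases hB
      cases hwf with | ite b h1 h2 => exact h1
  | iteFalse hb =>
      cases hA; cases hB
      cases hwf with | ite b h1 h2 => exact h2
  | whileUnfold => cases hA; cases hwf

lemma stepsN_frame {c σ n t d τ} (h : StepsN (c, σ) n t (d, τ)) :
    ∀ x, x ∉ cvars c → τ x = σ x := by
  generalize hA : (c, σ) = A at h
  generalize hB : (d, τ) = B at h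
  induction h generalizing c σ d τ with
  | refl => cases hA; cases hB; intro x _; rfl
  | @step A B C t u n hs hrest ih =>
      cases hA; cases hB
      obtain ⟨c1, σ1⟩ := B
      intro x hx
      rw [ih rfl rfl x (fun hmem => hx (step_cvars hs hmem)), step_frame hs x hx]

lemma step_lockstep {c σ σ' t t' d d' τ τ'}
    (hwf : WhileFree c) (hag : ∀ x ∈ cvars c, σ x = σ' x)
    (h : Step (c, σ) t (d, τ)) (h' : Step (c, σ') t' (d', τ')) :
    t = t' ∧ d = d' ∧ ∀ x ∈ cvars c, τ x = τ' x := by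
  generalize hA : (c, σ) = A at h
  generalize hB : (d, τ) = B at h
  induction h generalizing c σ σ' d d' τ τ' t' with
  | @assign x0 e σ0 =>
      cases hA; cases hB
      cases h'
      refine ⟨by rw [aleak_eq e σ0 σ'], rfl, ?_⟩
      intro x hx
      have he : aeval e σ0 = aeval e σ' :=
        aeval_agree e (fun y hy => hag y (by simp [cvars, hy]))
      by_cases hxx : x = x0
      · subst hxx; simp [Function.update, he]
      · simp [Function.update, hxx]
        exact hag x hx
  | @seqStep c1 σ0 t0 c1' σ1 c2 hs ih =>
      cases hA; cases hB
      cases hwf with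
      | seq h1 h2 =>
        cases h' with
        | seqStep _ hs' =>
            obtain ⟨ht, hd, hτ⟩ := ih h1
              (fun x hx => hag x (by simp [cvars, hx])) hs' rfl rfl
            subst hd
            refine ⟨ht, rfl, ?_⟩
            intro x hx
            by_cases hx1 : x ∈ cvars c1
            · exact hτ x hx1
            · rw [step_frame hs x hx1, step_frame hs' x hx1]
              exact hag x hx
        | seqSkip => cases hs
  | seqSkip c2 =>
      cases hA; cases hB
      cases h' with
      | seqStep _ hs' => cases hs'
      | seqSkip => exact ⟨rfl, rfl, fun x hx => hag x hx⟩
  | @iteTrue b c1 c2 σ0 hb =>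
      cases hA; cases hB
      have hbb : beval b σ' = true := by
        rw [← beval_agree b (fun y hy => hag y (by simp [cvars, hy]))]; exact hb
      cases h' with
      | iteTrue hb' =>
          exact ⟨by rw [bleak_eq b σ0 σ'], rfl, fun x hx => hag x hx⟩
      | iteFalse hb' => rw [hbb] at hb'; cases hb'
  | @iteFalse b c1 c2 σ0 hb =>
      cases hA; cases hB
      have hbb : beval b σ' = false := by
        rw [← beval_agree b (fun y hy => hag y (by simp [cvars, hy]))]; exact hb
      cases h' with
      | iteTrue hb' => rw [hbb] at hb'; cases hb'
      | iteFalse hb' =>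
          exact ⟨by rw [bleak_eq b σ0 σ'], rfl, fun x hx => hag x hx⟩
  | whileUnfold => cases hA; cases hwf

/-- a while-free command run from states agreeing on its
variables executes in lock-step with identical leakage. -/
theorem whilefree_lockstep (c : Cmd) (σ σ' : Store)
    (hwf : WhileFree c) (hagree : ∀ x ∈ cvars c, σ x = σ' x) :
    ∀ (n : ℕ) (t t' : List Leak) (d d' : Cmd) (τ τ' : Store),
      StepsN (c, σ) n t (d, τ) → StepsN (c, σ') n t' (d', τ') →
        t = t' ∧ d = d' ∧ ∀ x ∈ cvars c, τ x = τ' x := by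
  intro n
  induction n generalizing c σ σ' with
  | zero =>
      intro t t' d d' τ τ' h h'
      cases h; cases h'
      exact ⟨rfl, rfl, hagree⟩
  | succ n ih =>
      intro t t' d d' τ τ' h h'
      cases h with
      | @step _ B _ t0 u _ hs hrest =>
        cases h' with
        | @step _ B' _ t0' u' _ hs' hrest' =>
          obtain ⟨c1, σ1⟩ := B
          obtain ⟨c1', σ1'⟩ := B'
          obtain ⟨ht0, hc1, hσ1⟩ := step_lockstep hwf hagree hs hs'
          subst hc1
          have hwf1 : WhileFree c1 := step_wf hwf hs
          have hag1 : ∀ x ∈ cvars c1, σ1 x = σ1' x :=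
            fun x hx => hσ1 x (step_cvars hs hx)
          obtain ⟨hu, hd, hτ⟩ := ih c1 σ1 σ1' hwf1 hag1 u u' d d' τ τ' hrest hrest'
          refine ⟨by rw [ht0, hu], hd, ?_⟩
          intro x hx
          by_cases hx1 : x ∈ cvars c1
          · exact hτ x hx1
          · rw [stepsN_frame hrest x hx1, stepsN_frame hrest' x hx1]
            exact hσ1 x hx
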